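/- For every τ in the upper half-plane H and every t ∈ ℂ, the theta function θ₃ satisfies the modular S-transformation law θ₃(t/τ, −1/τ) = √(τ/i) · e^{πit²/τ} · θ₃(t,τ), where √(τ/i) denotes the principal branch of the square root (well defined since Re(τ/i) > 0 for τ ∈ H). -/

import Mathlib

noncomputable section

/-- `qpow τ x = e^{2πiτx}`, so that `qpow τ j = q^j` with `q = e^{2πiτ}`. -/
def qpow (τ x : ℂ) : ℂ := Complex.exp (2 * (Real.pi : ℂ) * Complex.I * τ * x)

/-- Jacobi theta function
`θ(v,τ) = 2 q^{1/8} sin(πv) ∏_{j=1}^∞ (1−q^j)(1−e^{2πiv}q^j)(1−e^{−2πiv}q^j)`. -/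
def jTheta (v τ : ℂ) : ℂ :=
  2 * qpow τ (1/8) * Complex.sin ((Real.pi : ℂ) * v) *
    ∏' j : ℕ, ((1 - qpow τ ((j : ℂ) + 1)) *
      (1 - Complex.exp (2 * (Real.pi : ℂ) * Complex.I * v) * qpow τ ((j : ℂ) + 1)) *
      (1 - Complex.exp (-(2 * (Real.pi : ℂ) * Complex.I * v)) * qpow τ ((j : ℂ) + 1)))

/-- Jacobi theta function
`θ₁(v,τ) = 2 q^{1/8} cos(πv) ∏_{j=1}^∞ (1−q^j)(1+e^{2πiv}q^j)(1+e^{−2πiv}q^j)`. -/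
def jTheta1 (v τ : ℂ) : ℂ :=
  2 * qpow τ (1/8) * Complex.cos ((Real.pi : ℂ) * v) *
    ∏' j : ℕ, ((1 - qpow τ ((j : ℂ) + 1)) *
      (1 + Complex.exp (2 * (Real.pi : ℂ) * Complex.I * v) * qpow τ ((j : ℂ) + 1)) *
      (1 + Complex.exp (-(2 * (Real.pi : ℂ) * Complex.I * v)) * qpow τ ((j : ℂ) + 1)))

/-- Jacobi theta function
`θ₂(v,τ) = ∏_{j=1}^∞ (1−q^j)(1−e^{2πiv}q^{j−1/2})(1−e^{−2πiv}q^{j−1/2})`. -/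
def jTheta2 (v τ : ℂ) : ℂ :=
  ∏' j : ℕ, ((1 - qpow τ ((j : ℂ) + 1)) *
    (1 - Complex.exp (2 * (Real.pi : ℂ) * Complex.I * v) * qpow τ ((j : ℂ) + 1/2)) *
    (1 - Complex.exp (-(2 * (Real.pi : ℂ) * Complex.I * v)) * qpow τ ((j : ℂ) + 1/2)))

/-- Jacobi theta function
`θ₃(v,τ) = ∏_{j=1}^∞ (1−q^j)(1+e^{2πiv}q^{j−1/2})(1+e^{−2πiv}q^{j−1/2})`. -/
def jTheta3 (v τ : ℂ) : ℂ :=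
  ∏' j : ℕ, ((1 - qpow τ ((j : ℂ) + 1)) *
    (1 + Complex.exp (2 * (Real.pi : ℂ) * Complex.I * v) * qpow τ ((j : ℂ) + 1/2)) *
    (1 + Complex.exp (-(2 * (Real.pi : ℂ) * Complex.I * v)) * qpow τ ((j : ℂ) + 1/2)))

/-- `θ'(0,τ) = ∂θ(v,τ)/∂v |_{v=0}`. -/
def jThetaDeriv (τ : ℂ) : ℂ := deriv (fun v => jTheta v τ) 0

end

/-!
Expanding `∏_{j<N} (1 + w x^(2j+1)) (1 + w⁻¹ x^(2j+1))` with Rothe's `q`-binomial theorem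
(`q = x²`) gives `∑_{|n| ≤ N} [2N, N+n]_q x^(n²) w^n`. After multiplying by `(q; q)_N` the
coefficient of `x^(n²) w^n` becomes `(q; q)_N (q; q)_{2N} / ((q; q)_{N+n} (q; q)_{N-n})`: it is
bounded uniformly in `N, n` and tends to `1`, so Tannery's theorem yields the Jacobi triple
product. Hence `θ₃` is Mathlib's `jacobiTheta₂`, and the `S`-transformation is the functional
equation of `jacobiTheta₂`, which comes from Poisson summation.
-/

open Finset

section QBinomial

variable {R : Type*} [CommRing R]

def qBinomial (q : R) : ℕ → ℕ → R
  | _, 0 => 1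
  | 0, _ + 1 => 0
  | n + 1, k + 1 => qBinomial q n (k + 1) + q ^ (n - k) * qBinomial q n k

/-- `qPochhammer q m = (q; q)_m`. -/
def qPochhammer (q : R) (m : ℕ) : R := ∏ j ∈ range m, (1 - q ^ (j + 1))

variable (q : R)

@[simp]
lemma qBinomial_zero_right (n : ℕ) : qBinomial q n 0 = 1 := by cases n <;> rfl

lemma qBinomial_succ_succ (n k : ℕ) :
    qBinomial q (n + 1) (k + 1) = qBinomial q n (k + 1) + q ^ (n - k) * qBinomial q n k := rfl

lemma qBinomial_of_lt {n k : ℕ} (h : n < k) : qBinomial q n k = 0 := by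
  induction n generalizing k with
  | zero => obtain ⟨k, rfl⟩ := Nat.exists_eq_succ_of_ne_zero h.ne'; rfl
  | succ n ih =>
    obtain ⟨k, rfl⟩ := Nat.exists_eq_succ_of_ne_zero (Nat.ne_zero_of_lt h)
    rw [qBinomial_succ_succ, ih (by omega), ih (by omega), mul_zero, add_zero]

@[simp]
lemma qBinomial_self (n : ℕ) : qBinomial q n n = 1 := by
  induction n with
  | zero => rfl
  | succ n ih => rw [qBinomial_succ_succ, qBinomial_of_lt q n.lt_succ_self, ih]; simp

@[simp]
lemma qPochhammer_zero : qPochhammer q 0 = 1 := rfl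

lemma qPochhammer_succ (m : ℕ) : qPochhammer q (m + 1) = qPochhammer q m * (1 - q ^ (m + 1)) :=
  prod_range_succ _ _

lemma qBinomial_mul_qPochhammer {n k : ℕ} (hk : k ≤ n) :
    qBinomial q n k * qPochhammer q k * qPochhammer q (n - k) = qPochhammer q n := by
  induction n generalizing k with
  | zero => obtain rfl := Nat.le_zero.mp hk; simp
  | succ n ih =>
    rcases k with _ | k
    · simp
    obtain rfl | hkn := (Nat.succ_le_succ_iff.mp hk).eq_or_lt
    · simp
    obtain ⟨m, rfl⟩ := Nat.exists_eq_add_of_lt hkn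
    have h₁ := ih (k := k + 1) (by omega)
    have h₂ := ih (k := k) (by omega)
    rw [show k + m + 1 - (k + 1) = m by omega, qPochhammer_succ q k] at h₁
    rw [show k + m + 1 - k = m + 1 by omega, qPochhammer_succ q m] at h₂
    rw [qBinomial_succ_succ, show k + m + 1 - k = m + 1 by omega,
      show k + m + 1 + 1 - (k + 1) = m + 1 by omega, qPochhammer_succ q (k + m + 1),
      qPochhammer_succ q k, qPochhammer_succ q m]
    linear_combination (1 - q ^ (m + 1)) * h₁ + q ^ (m + 1) * (1 - q ^ (k + 1)) * h₂

/-- Rothe's `q`-binomial theorem, with `q = x ^ 2` so that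
`q ^ (k (k - 1) / 2) = x ^ (k (k - 1))`. -/
lemma prod_one_add_mul_pow_eq_sum_qBinomial (x z : R) (n : ℕ) :
    ∏ j ∈ range n, (1 + z * x ^ (2 * j)) =
      ∑ k ∈ range (n + 1), qBinomial (x ^ 2) n k * x ^ (k * (k - 1)) * z ^ k := by
  induction n with
  | zero => simp
  | succ n ih =>
    have pascal : ∀ k ∈ range (n + 1),
        qBinomial (x ^ 2) (n + 1) (k + 1) * x ^ ((k + 1) * k) * z ^ (k + 1) =
          qBinomial (x ^ 2) n (k + 1) * x ^ ((k + 1) * k) * z ^ (k + 1) +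
            qBinomial (x ^ 2) n k * x ^ (k * (k - 1)) * z ^ k * (z * x ^ (2 * n)) := by
      intro k hk
      have hexp : (x ^ 2) ^ (n - k) * x ^ ((k + 1) * k) = x ^ (k * (k - 1)) * x ^ (2 * n) := by
        rw [← pow_mul, ← pow_add, ← pow_add]
        congr 1
        obtain ⟨m, rfl⟩ := Nat.exists_eq_add_of_le (Nat.lt_succ_iff.mp (mem_range.mp hk))
        rcases k with _ | k
        · simp
        · simp only [Nat.add_sub_cancel_left, Nat.add_sub_cancel]; ring
      rw [qBinomial_succ_succ]
      linear_combination qBinomial (x ^ 2) n k * z ^ (k + 1) * hexp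
    rw [prod_range_succ, ih, sum_range_succ' _ (n + 1)]
    simp only [Nat.add_sub_cancel]
    rw [sum_congr rfl pascal, sum_add_distrib, ← sum_mul,
      sum_range_succ (fun k ↦ qBinomial (x ^ 2) n (k + 1) * x ^ ((k + 1) * k) * z ^ (k + 1)),
      qBinomial_of_lt _ n.lt_succ_self, sum_range_succ' (fun k ↦ qBinomial (x ^ 2) n k * _ * _)]
    simp only [qBinomial_zero_right, Nat.add_sub_cancel]
    ring

variable {K : Type*} [Field K] {x w : K}

lemma sum_range_two_mul_add_one (N : ℕ) : ∑ j ∈ range N, (2 * j + 1) = N ^ 2 := by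
  induction N with
  | zero => rfl
  | succ N ih => rw [sum_range_succ, ih]; ring

/-- Up to a monomial, `1 + w⁻¹ x^(2j+1)` is `1 + w x^(-(2j+1))`; together with the factors
`1 + w x^(2j+1)` these form one run of `2N` factors `1 + z x^(2m)`, `z = w x^(1-2N)`. -/
lemma prod_range_one_add_mul_pow_odd_eq_prod_range_two_mul (hx : x ≠ 0) (hw : w ≠ 0) (N : ℕ) :
    ∏ j ∈ range N, ((1 + w * x ^ (2 * j + 1)) * (1 + w⁻¹ * x ^ (2 * j + 1))) =
      w ^ (-(N : ℤ)) * x ^ ((N : ℤ) ^ 2) *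
        ∏ m ∈ range (2 * N), (1 + w * x ^ (1 - 2 * (N : ℤ)) * x ^ (2 * m)) := by
  set f : ℤ → K := fun m ↦ 1 + w * x ^ (2 * m + 1)
  have hfactor (j : ℕ) : (1 + w * x ^ (2 * j + 1)) * (1 + w⁻¹ * x ^ (2 * j + 1)) =
      w⁻¹ * x ^ (2 * j + 1) * (f j * f (-j - 1)) := by
    have hx' : x ^ (2 * j + 1) ≠ 0 := pow_ne_zero _ hx
    simp only [f]
    rw [show 2 * (-(j : ℤ) - 1) + 1 = -((2 * j + 1 : ℕ) : ℤ) by push_cast; ring, zpow_neg,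
      show 2 * (j : ℤ) + 1 = ((2 * j + 1 : ℕ) : ℤ) by push_cast; ring, zpow_natCast]
    field_simp
    ring
  have hprefactor :
      ∏ j ∈ range N, w⁻¹ * x ^ (2 * j + 1) = w ^ (-(N : ℤ)) * x ^ ((N : ℤ) ^ 2) := by
    rw [prod_mul_distrib, prod_const, card_range, prod_pow_eq_pow_sum, sum_range_two_mul_add_one,
      zpow_neg, zpow_natCast, inv_pow]
    norm_cast
  have hreflect : ∏ j ∈ range N, f (-j - 1) = ∏ m ∈ range N, f (m - N) := by
    rw [← prod_range_reflect]
    refine prod_congr rfl fun m hm ↦ ?_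
    have := mem_range.1 hm
    congr 1
    omega
  have hjoin : ∏ m ∈ range (2 * N), f (m - N) =
      (∏ m ∈ range N, f (m - N)) * ∏ j ∈ range N, f j := by
    rw [two_mul, prod_range_add]
    congr 1
    refine prod_congr rfl fun j _ ↦ ?_
    push_cast
    ring_nf
  have hshift (m : ℕ) : f (m - N) = 1 + w * x ^ (1 - 2 * (N : ℤ)) * x ^ (2 * m) := by
    simp only [f]
    rw [mul_assoc, ← zpow_natCast x (2 * m), ← zpow_add₀ hx]
    push_cast
    ring_nf
  rw [prod_congr rfl fun j _ ↦ hfactor j, prod_mul_distrib, hprefactor, prod_mul_distrib,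
    hreflect, mul_comm (∏ j ∈ range N, f j), ← hjoin, prod_congr rfl fun m _ ↦ hshift m]

lemma prod_range_one_add_mul_pow_odd_eq_sum_qBinomial (hx : x ≠ 0) (hw : w ≠ 0) (N : ℕ) :
    ∏ j ∈ range N, ((1 + w * x ^ (2 * j + 1)) * (1 + w⁻¹ * x ^ (2 * j + 1))) =
      ∑ n ∈ Icc (-N : ℤ) N,
        qBinomial (x ^ 2) (2 * N) (n + N).toNat * x ^ (n ^ 2) * w ^ n := by
  rw [prod_range_one_add_mul_pow_odd_eq_prod_range_two_mul hx hw,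
    prod_one_add_mul_pow_eq_sum_qBinomial, mul_sum]
  refine sum_nbij' (fun k ↦ (k : ℤ) - N) (fun n ↦ (n + N).toNat) ?_ ?_ ?_ ?_ ?_
  iterate 4 intro _ _; simp_all only [mem_range, mem_Icc]; omega
  intro k _
  have hcast : ((k * (k - 1) : ℕ) : ℤ) = k * (k - 1) := by
    rcases k with _ | k
    · simp
    · push_cast [Nat.add_sub_cancel]; ring
  rw [show ((k : ℤ) - N + N).toNat = k by omega, mul_pow, ← zpow_natCast (x ^ _), ← zpow_mul,
    ← zpow_natCast x (k * (k - 1)), hcast, ← zpow_natCast w,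
    show ((k : ℤ) - N) ^ 2 = N ^ 2 + k * (k - 1) + (1 - 2 * N) * k by ring,
    show (k : ℤ) - N = -N + k by ring, zpow_add₀ hx, zpow_add₀ hx, zpow_add₀ hw]
  ring

end QBinomial

section TripleProduct

open Filter Topology

variable {q x w : ℂ}

lemma one_sub_pow_succ_ne_zero (hq : ‖q‖ < 1) (j : ℕ) : 1 - q ^ (j + 1) ≠ 0 := by
  refine sub_ne_zero.2 fun h ↦ ?_
  have : ‖q ^ (j + 1)‖ < 1 := by
    rw [norm_pow]
    exact pow_lt_one₀ (norm_nonneg _) hq j.succ_ne_zero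
  rw [← h, norm_one] at this
  exact lt_irrefl _ this

lemma qPochhammer_ne_zero (hq : ‖q‖ < 1) (m : ℕ) : qPochhammer q m ≠ 0 :=
  prod_ne_zero_iff.2 fun j _ ↦ one_sub_pow_succ_ne_zero hq j

lemma tendsto_qPochhammer (hq : ‖q‖ < 1) :
    Tendsto (qPochhammer q) atTop (𝓝 (∏' j : ℕ, (1 - q ^ (j + 1)))) :=
  (ModularForm.multipliable_one_sub_pow hq).hasProd.tendsto_prod_nat

lemma tprod_one_sub_pow_ne_zero (hq : ‖q‖ < 1) : ∏' j : ℕ, (1 - q ^ (j + 1)) ≠ 0 := by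
  simpa [← sub_eq_add_neg] using tprod_one_add_ne_zero_of_summable (f := fun j ↦ -q ^ (j + 1))
    (by simpa [← sub_eq_add_neg] using one_sub_pow_succ_ne_zero hq)
    (by simpa using (summable_nat_add_iff 1).mpr (summable_geometric_of_lt_one (norm_nonneg _) hq))

/-- The coefficient of `x ^ (n ^ 2) * w ^ n` in
`(q; q)_N ∏_{j<N} (1 + w x^(2j+1)) (1 + w⁻¹ x^(2j+1))` for `q = x ^ 2`. -/
def jacobiCoeff (q : ℂ) (N : ℕ) (n : ℤ) : ℂ :=
  if n.natAbs ≤ N then qPochhammer q N * qBinomial q (2 * N) (n + N).toNat else 0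

lemma jacobiCoeff_of_natAbs_le (hq : ‖q‖ < 1) {N : ℕ} {n : ℤ} (hn : n.natAbs ≤ N) :
    jacobiCoeff q N n = qPochhammer q N * qPochhammer q (2 * N) /
      (qPochhammer q (n + N).toNat * qPochhammer q (N - n).toNat) := by
  rw [jacobiCoeff, if_pos hn,
    eq_div_iff (mul_ne_zero (qPochhammer_ne_zero hq _) (qPochhammer_ne_zero hq _)),
    ← qBinomial_mul_qPochhammer q (show (n + N).toNat ≤ 2 * N by omega),
    show 2 * N - (n + N).toNat = (N - n).toNat by omega]
  ring

lemma tendsto_jacobiCoeff (hq : ‖q‖ < 1) (n : ℤ) :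
    Tendsto (fun N ↦ jacobiCoeff q N n) atTop (𝓝 1) := by
  have hL := tprod_one_sub_pow_ne_zero hq
  have hA := tendsto_qPochhammer hq
  have htop {f : ℕ → ℕ} (hf : ∀ N, N - n.natAbs ≤ f N) : Tendsto f atTop atTop :=
    tendsto_atTop_mono hf (tendsto_sub_atTop_nat _)
  have hquot := (hA.mul (hA.comp (htop (f := (2 * ·)) (by omega)))).div
    ((hA.comp (htop (f := fun N ↦ (n + N).toNat) (by omega))).mul
      (hA.comp (htop (f := fun N ↦ (N - n).toNat) (by omega))))
    (mul_ne_zero hL hL)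
  rw [div_self (mul_ne_zero hL hL)] at hquot
  refine hquot.congr' ((eventually_ge_atTop n.natAbs).mono fun N hN ↦ ?_)
  exact (jacobiCoeff_of_natAbs_le hq hN).symm

lemma exists_norm_jacobiCoeff_le (hq : ‖q‖ < 1) :
    ∃ C, ∀ N n, ‖jacobiCoeff q N n‖ ≤ C := by
  have hA := tendsto_qPochhammer hq
  obtain ⟨B, hB⟩ := hA.norm.bddAbove_range
  obtain ⟨B', hB'⟩ := (hA.inv₀ (tprod_one_sub_pow_ne_zero hq)).norm.bddAbove_range
  have hB₀ : 0 ≤ B := (norm_nonneg _).trans (hB ⟨0, rfl⟩)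
  have hB'₀ : 0 ≤ B' := (norm_nonneg _).trans (hB' ⟨0, rfl⟩)
  refine ⟨B * B * (B' * B'), fun N n ↦ ?_⟩
  by_cases hn : n.natAbs ≤ N
  · rw [jacobiCoeff_of_natAbs_le hq hn, div_eq_mul_inv, mul_inv, norm_mul, norm_mul, norm_mul]
    gcongr
    exacts [hB ⟨_, rfl⟩, hB ⟨_, rfl⟩, hB' ⟨_, rfl⟩, hB' ⟨_, rfl⟩]
  · rw [jacobiCoeff, if_neg hn, norm_zero]
    positivity

lemma summable_pow_sq_mul_pow {r s : ℝ} (hr₀ : 0 ≤ r) (hr : r < 1) (hs : 0 ≤ s) :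
    Summable fun m : ℕ ↦ r ^ (m ^ 2) * s ^ m := by
  have hsmall : ∀ᶠ m : ℕ in atTop, r ^ m * s ≤ 1 / 2 := by
    refine Tendsto.eventually_le_const one_half_pos ?_
    simpa using (tendsto_pow_atTop_nhds_zero_of_lt_one hr₀ hr).mul_const s
  refine .of_norm_bounded_eventually_nat summable_geometric_two ?_
  filter_upwards [hsmall] with m hm
  rw [Real.norm_of_nonneg (by positivity), sq, pow_mul, ← mul_pow]
  exact pow_le_pow_left₀ (by positivity) hm m

lemma summable_norm_zpow_sq_mul_zpow (hx : ‖x‖ < 1) (w : ℂ) :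
    Summable fun n : ℤ ↦ ‖x ^ (n ^ 2) * w ^ n‖ := by
  apply Summable.of_nat_of_neg
  · simpa [← zpow_natCast] using summable_pow_sq_mul_pow (norm_nonneg x) hx (norm_nonneg w)
  · simpa [← zpow_natCast] using summable_pow_sq_mul_pow (norm_nonneg x) hx (norm_nonneg w⁻¹)

lemma prod_range_triple_eq_tsum_jacobiCoeff (hx : x ≠ 0) (hw : w ≠ 0) (N : ℕ) :
    ∏ j ∈ range N, ((1 - (x ^ 2) ^ (j + 1)) * (1 + w * x ^ (2 * j + 1)) *
      (1 + w⁻¹ * x ^ (2 * j + 1))) =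
      ∑' n : ℤ, jacobiCoeff (x ^ 2) N n * (x ^ (n ^ 2) * w ^ n) := by
  rw [tsum_eq_sum (s := Icc (-N : ℤ) N) fun n hn ↦ by
      rw [jacobiCoeff, if_neg (by simp only [mem_Icc] at hn; omega), zero_mul],
    prod_congr rfl fun j _ ↦ mul_assoc _ _ _, prod_mul_distrib, ← qPochhammer,
    prod_range_one_add_mul_pow_odd_eq_sum_qBinomial hx hw, mul_sum]
  refine sum_congr rfl fun n hn ↦ ?_
  rw [jacobiCoeff, if_pos (by simp only [mem_Icc] at hn; omega)]
  ring

theorem jacobi_triple_product (hx₀ : x ≠ 0) (hx : ‖x‖ < 1) (hw : w ≠ 0) :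
    ∏' j : ℕ, ((1 - (x ^ 2) ^ (j + 1)) * (1 + w * x ^ (2 * j + 1)) *
      (1 + w⁻¹ * x ^ (2 * j + 1))) =
      ∑' n : ℤ, x ^ (n ^ 2) * w ^ n := by
  have hq : ‖x ^ 2‖ < 1 := by rw [norm_pow]; exact pow_lt_one₀ (norm_nonneg _) hx two_ne_zero
  have hsummable (c : ℂ) : Summable fun j : ℕ ↦ c * x ^ (2 * j + 1) :=
    ((summable_geometric_of_norm_lt_one hq).mul_left (c * x)).congr fun j ↦ by ring
  have hmult := ((ModularForm.multipliable_one_sub_pow hq).mul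
    (Complex.multipliable_one_add_of_summable (hsummable w))).mul
    (Complex.multipliable_one_add_of_summable (hsummable w⁻¹))
  obtain ⟨C, hC⟩ := exists_norm_jacobiCoeff_le hq
  have hlim := tendsto_tsum_of_dominated_convergence
    ((summable_norm_zpow_sq_mul_zpow hx w).mul_left C)
    (fun n ↦ (tendsto_jacobiCoeff hq n).mul_const (x ^ (n ^ 2) * w ^ n))
    (.of_forall fun N n ↦ by rw [norm_mul]; gcongr; exact hC N n)
  simp only [one_mul, ← prod_range_triple_eq_tsum_jacobiCoeff hx₀ hw] at hlim
  exact tendsto_nhds_unique hmult.hasProd.tendsto_prod_nat hlim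

end TripleProduct

open Complex
open scoped Real

lemma jTheta3_eq_jacobiTheta₂ {τ : ℂ} (hτ : 0 < τ.im) (t : ℂ) :
    jTheta3 t τ = jacobiTheta₂ t τ := by
  have hx : ‖cexp (π * I * τ)‖ < 1 := by
    rw [norm_exp, Real.exp_lt_one_iff]
    simpa using mul_pos Real.pi_pos hτ
  have hqpow (a : ℂ) (k : ℕ) (h : 2 * π * I * τ * a = k * (π * I * τ)) :
      qpow τ a = cexp (π * I * τ) ^ k := by
    rw [qpow, h, exp_nat_mul]
  rw [jTheta3, jacobiTheta₂]
  convert jacobi_triple_product (w := cexp (2 * π * I * t)) (exp_ne_zero _) hx (exp_ne_zero _)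
    using 1
  · refine tprod_congr fun j ↦ ?_
    rw [hqpow _ (2 * (j + 1)) (by push_cast; ring), hqpow _ (2 * j + 1) (by push_cast; ring),
      exp_neg, pow_mul]
  · refine tsum_congr fun n ↦ ?_
    rw [jacobiTheta₂_term, ← exp_int_mul, ← exp_int_mul, ← exp_add]
    congr 1
    push_cast
    ring

theorem theta3_S_transformation (τ : ℂ) (hτ : 0 < τ.im) (t : ℂ) :
    jTheta3 (t / τ) (-1 / τ) =
      (τ / Complex.I) ^ ((1 : ℂ) / 2) *
        Complex.exp ((Real.pi : ℂ) * Complex.I * t ^ 2 / τ) * jTheta3 t τ := by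
  have hτ₀ : τ ≠ 0 := by rintro rfl; simp at hτ
  have hSτ : 0 < (-1 / τ).im := by
    rw [neg_div, neg_im, one_div, inv_im, neg_div, neg_neg]
    exact div_pos hτ (normSq_pos.mpr hτ₀)
  have hsqrt : (-I * τ) ^ (1 / 2 : ℂ) ≠ 0 :=
    cpow_ne_zero_iff.2 (.inl (mul_ne_zero (neg_ne_zero.2 I_ne_zero) hτ₀))
  rw [jTheta3_eq_jacobiTheta₂ hSτ, jTheta3_eq_jacobiTheta₂ hτ,
    jacobiTheta₂_functional_equation t τ, show τ / I = -I * τ by rw [div_I]; ring,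
    show -π * I * t ^ 2 / τ = -(π * I * t ^ 2 / τ) by ring, exp_neg]
  field_simp
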